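/- arXiv:2310.10682 — 2 statements merged into one kernel-verified Lean document; each statement's English description precedes it below -/
import Mathlib

section
/- Let n > 2, let rho be the cyclic shift on F_2^n, and let sigma = rho^k for any 1 ≤ k ≤ n with order d = ord(sigma) = n/gcd(n,k). Define S_sigma = sum over x in F_2^n of (-1)^(x·(sigma x)). If d is even then S_sigma = 2^(n/2 + n/d), and if d is odd then S_sigma = 0. -/
open Finset
open Fin.NatCast

/-- Cyclic shift on `F_2^n`: `(shift x) i = x (i+1)`. -/
def shift (n : ℕ) (x : Fin n → ZMod 2) : Fin n → ZMod 2 := fun i => x (finRotate n i)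

/-- Dot product on `F_2^n`. -/
def dot (n : ℕ) (x y : Fin n → ZMod 2) : ZMod 2 := ∑ i, x i * y i

/-- `(-1)^b` as an integer. -/
def sgn (b : ZMod 2) : ℤ := if b = 0 then 1 else -1

lemma sgn_add (a b : ZMod 2) : sgn (a+b) = sgn a * sgn b := by
  fin_cases a <;> fin_cases b <;> decide

lemma sgn_sum {ι} (s : Finset ι) (f : ι → ZMod 2) :
    sgn (∑ i ∈ s, f i) = ∏ i ∈ s, sgn (f i) := by
  classical
  induction s using Finset.induction with
  | empty => simp [sgn]
  | insert _ _ h ih => rw [Finset.sum_insert h, Finset.prod_insert h, sgn_add, ih]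

lemma shift_iterate (m k : ℕ) (x : Fin (m+1) → ZMod 2) (i : Fin (m+1)) :
    (shift (m+1))^[k] x i = x (i + (k : Fin (m+1))) := by
  induction k generalizing x with
  | zero => simp
  | succ k ih =>
      rw [Function.iterate_succ_apply, ih (shift (m+1) x)]
      show x (finRotate (m+1) _) = _
      rw [finRotate_succ_apply]
      push_cast
      rw [add_assoc]

def Msgn : Matrix (ZMod 2) (ZMod 2) ℤ := Matrix.of fun a b => sgn (a*b)

lemma Msgn_sq : Msgn ^ 2 = (2:ℤ) • (1 : Matrix (ZMod 2) (ZMod 2) ℤ) := by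
  ext a b
  rw [pow_two, Matrix.mul_apply]
  fin_cases a <;> fin_cases b <;>
    simp [Msgn, sgn, Matrix.one_apply, Finset.sum_ite_eq] <;> decide

lemma pathSum : ∀ (c : ℕ) (h : ZMod 2 → ZMod 2 → ℤ),
    ∑ y : Fin (c+1) → ZMod 2,
      (∏ i : Fin c, Msgn (y i.castSucc) (y i.succ)) * h (y 0) (y (Fin.last c))
    = ∑ a : ZMod 2, ∑ b : ZMod 2, (Msgn ^ c) a b * h a b := by
  intro c
  induction c with
  | zero =>
      intro h
      rw [← Equiv.sum_comp (Equiv.funUnique (Fin 1) (ZMod 2)).symm]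
      simp [Matrix.one_apply, Fin.last]
  | succ c ih =>
      intro h
      rw [← Equiv.sum_comp (Fin.consEquiv (fun _ : Fin (c+2) => ZMod 2))]
      rw [Fintype.sum_prod_type]
      have step : ∀ (a : ZMod 2) (z : Fin (c+1) → ZMod 2),
          (∏ i : Fin (c+1), Msgn ((Fin.cons a z : Fin (c+2) → ZMod 2) i.castSucc)
              ((Fin.cons a z : Fin (c+2) → ZMod 2) i.succ))
            * h ((Fin.cons a z : Fin (c+2) → ZMod 2) 0)
                ((Fin.cons a z : Fin (c+2) → ZMod 2) (Fin.last (c+1)))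
          = (∏ i : Fin c, Msgn (z i.castSucc) (z i.succ)) *
              ((fun a' b => Msgn a a' * h a b) (z 0) (z (Fin.last c))) := by
        intro a z
        rw [Fin.prod_univ_succ]
        have h1 : ∀ i : Fin c,
            Msgn ((Fin.cons a z : Fin (c+2) → ZMod 2) i.succ.castSucc)
              ((Fin.cons a z : Fin (c+2) → ZMod 2) i.succ.succ)
            = Msgn (z i.castSucc) (z i.succ) := by
          intro i
          rw [← Fin.succ_castSucc, Fin.cons_succ, Fin.cons_succ]
        simp only [h1]
        rw [← Fin.succ_last, Fin.cons_succ]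
        simp only [Fin.castSucc_zero, Fin.cons_zero, Fin.succ_zero_eq_one]
        rw [Fin.cons_succ]
        ring
      simp only [Fin.consEquiv_apply]
      calc ∑ a : ZMod 2, ∑ z : Fin (c+1) → ZMod 2,
            (∏ i : Fin (c+1), Msgn ((Fin.cons a z : Fin (c+2) → ZMod 2) i.castSucc)
                ((Fin.cons a z : Fin (c+2) → ZMod 2) i.succ))
              * h ((Fin.cons a z : Fin (c+2) → ZMod 2) 0)
                  ((Fin.cons a z : Fin (c+2) → ZMod 2) (Fin.last (c+1)))
          = ∑ a : ZMod 2, ∑ z : Fin (c+1) → ZMod 2,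
            (∏ i : Fin c, Msgn (z i.castSucc) (z i.succ)) *
              ((fun a' b => Msgn a a' * h a b) (z 0) (z (Fin.last c))) := by
            exact Finset.sum_congr rfl fun a _ => Finset.sum_congr rfl fun z _ => step a z
        _ = ∑ a : ZMod 2, ∑ a' : ZMod 2, ∑ b : ZMod 2, (Msgn ^ c) a' b * (Msgn a a' * h a b) := by
            exact Finset.sum_congr rfl fun a _ => ih (fun a' b => Msgn a a' * h a b)
        _ = ∑ a : ZMod 2, ∑ b : ZMod 2, (Msgn ^ (c+1)) a b * h a b := by
            refine Finset.sum_congr rfl fun a _ => ?_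
            rw [Finset.sum_comm]
            refine Finset.sum_congr rfl fun b _ => ?_
            rw [pow_succ', Matrix.mul_apply, Finset.sum_mul]
            refine Finset.sum_congr rfl fun a' _ => ?_
            ring

lemma fact1 (c : ℕ) (i : Fin c) : (i.castSucc + 1 : Fin (c+1)) = i.succ := by
  have hc : 0 < c := i.pos
  apply Fin.ext
  rw [Fin.add_def]
  simp only [Fin.val_one', Fin.coe_castSucc, Fin.val_succ]
  have h1 : 1 % (c+1) = 1 := Nat.mod_eq_of_lt (by omega)
  rw [h1, Nat.mod_eq_of_lt (by omega)]

lemma fact2 (c : ℕ) : (Fin.last c + 1 : Fin (c+1)) = 0 := by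
  apply Fin.ext
  rw [Fin.add_def]
  simp only [Fin.val_one', Fin.val_last, Fin.val_zero]
  rcases Nat.eq_zero_or_pos c with h | h
  · subst h; rfl
  · have h1 : 1 % (c+1) = 1 := Nat.mod_eq_of_lt (by omega)
    rw [h1, Nat.mod_self]

lemma cycSum (c : ℕ) :
    ∑ y : Fin (c+1) → ZMod 2, ∏ j : Fin (c+1), sgn (y j * y (j+1))
      = Matrix.trace (Msgn ^ (c+1)) := by
  have key : ∀ y : Fin (c+1) → ZMod 2,
      ∏ j : Fin (c+1), sgn (y j * y (j+1))
        = (∏ i : Fin c, Msgn (y i.castSucc) (y i.succ)) * Msgn (y (Fin.last c)) (y 0) := by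
    intro y
    rw [Fin.prod_univ_castSucc (f := fun j => sgn (y j * y (j+1)))]
    congr 1
    · exact Finset.prod_congr rfl fun i _ => by rw [fact1]; rfl
    · rw [fact2]; rfl
  rw [Finset.sum_congr rfl fun y _ => key y, pathSum c (fun a b => Msgn b a)]
  rw [Matrix.trace]
  refine Finset.sum_congr rfl fun a _ => ?_
  rw [Matrix.diag_apply, pow_succ, Matrix.mul_apply]

lemma trace_even (e : ℕ) : Matrix.trace (Msgn ^ (2*e)) = 2^e * 2 := by
  rw [pow_mul, Msgn_sq, smul_pow, one_pow, Matrix.trace_smul, Matrix.trace_one]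
  simp [ZMod.card]

lemma trace_odd (e : ℕ) : Matrix.trace (Msgn ^ (2*e+1)) = 0 := by
  rw [pow_succ, pow_mul, Msgn_sq, smul_pow, one_pow, smul_mul_assoc, one_mul,
    Matrix.trace_smul]
  have : Matrix.trace Msgn = 0 := by decide
  rw [this, smul_zero]

lemma key_lemma (m k g c : ℕ) (hg : 0 < g) (hgd : g * (c+1) = m+1) (hgk : g ∣ k)
    (hcop : Nat.Coprime (c+1) (k/g)) :
    (∑ x : Fin (m+1) → ZMod 2, ∏ i : Fin (m+1), sgn (x i * x (i + (k : Fin (m+1)))))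
    = (∑ y : Fin (c+1) → ZMod 2, ∏ j : Fin (c+1), sgn (y j * y (j+1))) ^ g := by
  obtain ⟨k', hk'⟩ := hgk
  have hdk : (m+1) ∣ (c+1) * k := ⟨k', by rw [hk', ← hgd]; ring⟩
  set φ : Fin g × Fin (c+1) → Fin (m+1) :=
    fun p => ⟨(p.1.val + p.2.val * k) % (m+1), Nat.mod_lt _ (by omega)⟩ with hφ
  have propA : ∀ (r : Fin g) (j : Fin (c+1)), φ (r, j+1) = φ (r, j) + (k : Fin (m+1)) := by
    intro r j
    apply Fin.ext
    have hval1 : ((j + 1 : Fin (c+1))).val = (j.val + 1 % (c+1)) % (c+1) := by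
      rw [Fin.add_def, Fin.val_one']
    have A : (j.val + 1 % (c+1)) % (c+1) ≡ j.val + 1 [MOD (c+1)] :=
      (Nat.mod_modEq _ (c+1)).trans (Nat.ModEq.add_left _ (Nat.mod_modEq 1 (c+1)))
    have B : ((j.val + 1 % (c+1)) % (c+1)) * k ≡ (j.val + 1) * k [MOD (c+1) * k] :=
      A.mul_right' k
    have B' : ((j.val + 1 % (c+1)) % (c+1)) * k ≡ (j.val + 1) * k [MOD (m+1)] :=
      Nat.ModEq.of_dvd hdk B
    have C : r.val + ((j.val + 1 % (c+1)) % (c+1)) * k ≡ r.val + (j.val * k + k) [MOD (m+1)] := by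
      have := B'.add_left r.val
      rwa [add_one_mul] at this
    have D : (r.val + j.val * k) % (m+1) + k % (m+1) ≡ r.val + (j.val * k + k) [MOD (m+1)] := by
      have := (Nat.mod_modEq (r.val + j.val * k) (m+1)).add (Nat.mod_modEq k (m+1))
      rwa [add_assoc] at this
    show (r.val + ((j+1 : Fin (c+1))).val * k) % (m+1) = _
    rw [hval1, Fin.add_def, Fin.val_natCast]
    exact C.trans D.symm
  have hinj : Function.Injective φ := by
    rintro ⟨r, j⟩ ⟨r', j'⟩ hpq
    have h1 : r.val + j.val * k ≡ r'.val + j'.val * k [MOD (m+1)] := by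
      have := congrArg Fin.val hpq
      simpa [hφ, Nat.ModEq] using this
    have hgn : g ∣ (m+1) := ⟨c+1, hgd.symm⟩
    have h2 : r.val + j.val * k ≡ r'.val + j'.val * k [MOD g] := Nat.ModEq.of_dvd hgn h1
    have hk0 : k ≡ 0 [MOD g] := (Nat.modEq_zero_iff_dvd).2 ⟨k', hk'⟩
    have h3 : r.val ≡ r'.val [MOD g] := by
      have e1 : r.val + j.val * k ≡ r.val + j.val * 0 [MOD g] :=
        Nat.ModEq.add_left _ (hk0.mul_left j.val)
      have e2 : r'.val + j'.val * k ≡ r'.val + j'.val * 0 [MOD g] :=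
        Nat.ModEq.add_left _ (hk0.mul_left j'.val)
      simpa using (e1.symm.trans h2).trans e2
    have hr : r = r' := by
      apply Fin.ext
      have := h3
      rwa [Nat.ModEq, Nat.mod_eq_of_lt r.isLt, Nat.mod_eq_of_lt r'.isLt] at this
    subst hr
    have h4 : j.val * k ≡ j'.val * k [MOD (m+1)] := (Nat.ModEq.add_left_cancel' r.val h1)
    have h5 : ((m:ℤ)+1) ∣ (j'.val : ℤ) * k - j.val * k := by
      have := h4.dvd
      push_cast at this ⊢
      exact this
    have h6 : ((c:ℤ)+1) ∣ ((j'.val : ℤ) - j.val) * k' := by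
      have hgz : (g:ℤ) ≠ 0 := by exact_mod_cast hg.ne'
      rw [← mul_dvd_mul_iff_left hgz]
      have heq : (g:ℤ) * (((j'.val : ℤ) - j.val) * k') = (j'.val : ℤ) * k - j.val * k := by
        rw [hk']; push_cast; ring
      have heq2 : (g:ℤ) * ((c:ℤ)+1) = (m:ℤ)+1 := by exact_mod_cast hgd
      rw [heq, heq2]
      exact h5
    have hcopZ : IsCoprime ((c:ℤ)+1) (k' : ℤ) := by
      have : Nat.Coprime (c+1) k' := by
        have : k / g = k' := by rw [hk']; exact Nat.mul_div_cancel_left k' hg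
        rwa [this] at hcop
      have := Nat.isCoprime_iff_coprime.2 this
      push_cast at this
      exact this
    have h7 : ((c:ℤ)+1) ∣ ((j'.val : ℤ) - j.val) := hcopZ.dvd_of_dvd_mul_right h6
    have hj : j = j' := by
      apply Fin.ext
      have hb1 := j.isLt
      have hb2 := j'.isLt
      have := Int.eq_zero_of_abs_lt_dvd h7 (by
        rw [abs_lt]
        constructor <;> [push_cast; push_cast] <;> omega)
      omega
    rw [hj]
  have hbij : Function.Bijective φ :=
    (Fintype.bijective_iff_injective_and_card φ).2 ⟨hinj, by simp [hgd]⟩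
  set e := Equiv.ofBijective φ hbij with he
  have heapp : ∀ p, e p = φ p := fun p => rfl
  have step1 : ∀ x : Fin (m+1) → ZMod 2,
      ∏ i : Fin (m+1), sgn (x i * x (i + (k : Fin (m+1))))
      = ∏ p : Fin g × Fin (c+1), sgn (x (e p) * x (e (p.1, p.2 + 1))) := by
    intro x
    rw [← Equiv.prod_comp e (fun i => sgn (x i * x (i + (k : Fin (m+1)))))]
    refine Finset.prod_congr rfl fun p _ => ?_
    rw [heapp, heapp, ← propA p.1 p.2]
  set E : (Fin g × Fin (c+1) → ZMod 2) ≃ (Fin (m+1) → ZMod 2) :=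
    Equiv.arrowCongr e (Equiv.refl (ZMod 2)) with hE
  calc (∑ x : Fin (m+1) → ZMod 2, ∏ i : Fin (m+1), sgn (x i * x (i + (k : Fin (m+1)))))
      = ∑ x : Fin (m+1) → ZMod 2, ∏ p : Fin g × Fin (c+1),
          sgn (x (e p) * x (e (p.1, p.2 + 1))) := Finset.sum_congr rfl fun x _ => step1 x
    _ = ∑ z : Fin g × Fin (c+1) → ZMod 2, ∏ p : Fin g × Fin (c+1),
          sgn (z p * z (p.1, p.2 + 1)) := by
        rw [← Equiv.sum_comp E
          (fun x => ∏ p : Fin g × Fin (c+1), sgn (x (e p) * x (e (p.1, p.2 + 1))))]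
        refine Finset.sum_congr rfl fun z _ => Finset.prod_congr rfl fun p _ => ?_
        simp [hE, Equiv.arrowCongr]
    _ = ∑ z : Fin g × Fin (c+1) → ZMod 2, ∏ r : Fin g, ∏ j : Fin (c+1),
          sgn (z (r, j) * z (r, j + 1)) := by
        refine Finset.sum_congr rfl fun z _ => ?_
        rw [Fintype.prod_prod_type]
    _ = ∑ w : Fin g → Fin (c+1) → ZMod 2, ∏ r : Fin g, ∏ j : Fin (c+1),
          sgn (w r j * w r (j + 1)) := by
        rw [← Equiv.sum_comp (Equiv.curry (Fin g) (Fin (c+1)) (ZMod 2)).symm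
          (fun z => ∏ r : Fin g, ∏ j : Fin (c+1), sgn (z (r, j) * z (r, j + 1)))]
        refine Finset.sum_congr rfl fun w _ => ?_
        simp [Equiv.curry, Function.uncurry]
    _ = ∏ r : Fin g, ∑ y : Fin (c+1) → ZMod 2, ∏ j : Fin (c+1),
          sgn (y j * y (j + 1)) := by
        rw [Finset.prod_univ_sum]
        simp
    _ = (∑ y : Fin (c+1) → ZMod 2, ∏ j : Fin (c+1), sgn (y j * y (j+1))) ^ g := by
        rw [Finset.prod_const, Finset.card_univ, Fintype.card_fin]

/-- Value of `S_σ = ∑_x (-1)^(x·σx)` for `σ = ρ^k`, `1 ≤ k ≤ n`, where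
`σ` has order `d = n / gcd(n,k)`. -/
theorem S_sigma_general (n k : ℕ) (hn : 2 < n) (hk1 : 1 ≤ k) (hkn : k ≤ n) :
    (Even (n / Nat.gcd n k) →
      (∑ x : Fin n → ZMod 2, sgn (dot n x ((shift n)^[k] x))) =
        2 ^ (n / 2 + n / (n / Nat.gcd n k))) ∧
    (Odd (n / Nat.gcd n k) →
      (∑ x : Fin n → ZMod 2, sgn (dot n x ((shift n)^[k] x))) = 0) := by
  obtain ⟨m, rfl⟩ : ∃ m, n = m + 1 := ⟨n - 1, by omega⟩
  set g := Nat.gcd (m+1) k with hgdef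
  set d := (m+1) / g with hddef
  have hgpos : 0 < g := Nat.gcd_pos_of_pos_left k (by omega)
  have hgdvd : g ∣ (m+1) := Nat.gcd_dvd_left _ _
  have hgk : g ∣ k := Nat.gcd_dvd_right _ _
  have hmul : g * d = m + 1 := Nat.mul_div_cancel' hgdvd
  have hdpos : 0 < d := by
    rcases Nat.eq_zero_or_pos d with h | h
    · rw [h, mul_zero] at hmul; omega
    · exact h
  obtain ⟨c, hc⟩ : ∃ c, d = c + 1 := ⟨d - 1, by omega⟩
  have hcop : Nat.Coprime (c+1) (k/g) := by
    rw [← hc, hddef]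
    exact Nat.coprime_div_gcd_div_gcd hgpos
  have hdot : ∀ x : Fin (m+1) → ZMod 2,
      sgn (dot (m+1) x ((shift (m+1))^[k] x))
      = ∏ i : Fin (m+1), sgn (x i * x (i + (k : Fin (m+1)))) := by
    intro x
    rw [dot, sgn_sum]
    exact Finset.prod_congr rfl fun i _ => by rw [shift_iterate]
  have hS : (∑ x : Fin (m+1) → ZMod 2, sgn (dot (m+1) x ((shift (m+1))^[k] x)))
      = (∑ y : Fin (c+1) → ZMod 2, ∏ j : Fin (c+1), sgn (y j * y (j+1))) ^ g := by
    rw [Finset.sum_congr rfl fun x _ => hdot x]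
    exact key_lemma m k g c hgpos (by rw [← hc]; exact hmul) hgk hcop
  have hT := cycSum c
  have hnd : (m+1) / d = g := by
    rw [← hmul]
    exact Nat.mul_div_cancel g hdpos
  constructor
  · intro hev
    rw [hc] at hev
    obtain ⟨e, he⟩ := hev
    have he2 : c + 1 = 2 * e := by rw [he, two_mul]
    rw [hS, hT, he2, trace_even]
    rw [hnd]
    have hn2 : (m+1) / 2 = g * e := by
      rw [← hmul, hc, he2]
      have : g * (2 * e) = g * e * 2 := by ring
      rw [this, Nat.mul_div_cancel _ (by norm_num)]
    rw [hn2]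
    have : (2:ℤ)^e * 2 = 2^(e+1) := by ring
    rw [this, ← pow_mul]
    congr 1
    ring
  · intro hodd
    rw [hc] at hodd
    obtain ⟨e, he⟩ := hodd
    rw [hS, hT, he, trace_odd, zero_pow hgpos.ne']
end

section
/- Let k ≥ 1 and let m ≥ 3 be odd. Then the sum over all tuples (b_1,...,b_m) of vectors in F_2^k of (-1)^(b_1·b_2 + b_2·b_3 + ... + b_{m-1}·b_m + b_m·b_1) equals 0. -/
/-!
Translating every block by the same vector `v` with `v · v = 1` is a bijection of the tuples.
Since `v · b` and `b · v` agree, the cross terms it creates appear in pairs and cancel over `𝔽₂`,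
so the exponent only gains `m (v · v) = 1` for odd `m`: the summand changes sign, and the sum
equals its own negative.
-/

open Finset

open Matrix

theorem Fintype.sum_eq_zero_of_comp_equiv_eq_neg {α R : Type*} [Fintype α] [NonAssocRing R]
    [NoZeroDivisors R] [CharZero R] (e : α ≃ α) {f : α → R} (h : ∀ a, f (e a) = -f a) :
    ∑ a, f a = 0 :=
  CharZero.eq_neg_self_iff.mp <| calc
    ∑ a, f a = ∑ a, f (e a) := (e.sum_comp f).symm
    _ = -∑ a, f a := by simp only [h, sum_neg_distrib]

theorem sum_dotProduct_add_const {ι κ R : Type*} [Fintype ι] [Fintype κ] [CommRing R] [CharP R 2]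
    (σ : ι ≃ ι) (b : ι → κ → R) (v : κ → R) :
    ∑ i, (b i + v) ⬝ᵥ (b (σ i) + v) = ∑ i, b i ⬝ᵥ b (σ i) + Fintype.card ι • (v ⬝ᵥ v) := by
  have cross_terms_cancel : ∑ i, b i ⬝ᵥ v + ∑ i, v ⬝ᵥ b (σ i) = 0 := by
    rw [σ.sum_comp (fun i => v ⬝ᵥ b i)]
    simp only [dotProduct_comm v, CharTwo.add_self_eq_zero]
  simp only [add_dotProduct, dotProduct_add, sum_add_distrib, sum_const, card_univ]
  linear_combination cross_terms_cancel

theorem dot_eq_dotProduct (n : ℕ) (x y : Fin n → ZMod 2) : dot n x y = x ⬝ᵥ y :=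
  rfl

theorem sgn_add_one (x : ZMod 2) : sgn (x + 1) = -sgn x := by
  revert x; decide

theorem exists_dotProduct_self_eq_one {κ R : Type*} [Fintype κ] [DecidableEq κ] [Semiring R]
    [Nonempty κ] : ∃ v : κ → R, v ⬝ᵥ v = 1 :=
  ⟨Pi.single (Classical.arbitrary κ) 1, by simp⟩

/-- The cyclic character sum over tuples of `m` blocks with `m` odd vanishes. -/
theorem cyclic_block_sum_odd (k m : ℕ) (hk : 1 ≤ k) (hm : 3 ≤ m) (hmo : Odd m) :
    (∑ b : Fin m → (Fin k → ZMod 2),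
        sgn (∑ i : Fin m, dot k (b i) (b (i + ⟨1, by omega⟩)))) = 0 := by
  have : NeZero m := ⟨by omega⟩
  have : Nonempty (Fin k) := ⟨⟨0, hk⟩⟩
  obtain ⟨v, hv⟩ := exists_dotProduct_self_eq_one (κ := Fin k) (R := ZMod 2)
  refine Fintype.sum_eq_zero_of_comp_equiv_eq_neg (Equiv.addRight fun _ => v) fun b => ?_
  have exponent_add_one := sum_dotProduct_add_const (Equiv.addRight ⟨1, by omega⟩) b v
  simp only [Equiv.coe_addRight, Fintype.card_fin, hv, nsmul_one, hmo.natCast_zmod_two]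
    at exponent_add_one
  simpa only [Equiv.coe_addRight, Pi.add_apply, dot_eq_dotProduct, ← sgn_add_one]
    using congrArg sgn exponent_add_one
end
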